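/- arXiv:math/0302067 — 3 statements merged into one kernel-verified Lean document; each statement's English description precedes it below -/
import Mathlib

section
/- Let g be a Lie algebra and Z an element of the third exterior power of g that is g-invariant (viewed as an antisymmetric tensor in g⊗g⊗g). Define Z_n = Sym_{2,...,2n}([Z^{1,2,3},[Z^{3,4,5},[...,Z^{2n-1,2n,2n+1}]...]]) in g^{⊗(2n+1)}, where Sym_{2,...,2n} denotes symmetrization over the tensor factors 2 through 2n. Then Z_n is antisymmetric under the exchange of the first and last (i.e., (2n+1)-st) tensor factors. -/
open TensorProduct

attribute [local instance 100] LieRing.ofAssociativeRing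

/- STATEMENT 0: For `Z ∈ ∧³(g)^g`, the tensor
`Z_n = Sym_{2,…,2n}([Z^{1,2,3},[Z^{3,4,5},[…,Z^{2n-1,2n,2n+1}]…]]) ∈ g^{⊗(2n+1)}`
is antisymmetric under the exchange of the first and last tensor factors.
We realize `g^{⊗(2n+1)} ⊂ U(g)^{⊗(2n+1)} ⊂ U(⊕_{i∈ℕ} g)` (enveloping algebra of
the direct-sum Lie algebra `ℕ → g`); slots are 0-indexed, so the 1-indexed
slots `1,…,2n+1` of the paper are `0,…,2n`, the symmetrization is over slots
`1,…,2n-1`, and the exchanged slots are `0` and `2n`.  Commutators of placed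
tensors are taken in this enveloping algebra. -/

variable (g : Type*) [LieRing g] [LieAlgebra ℂ g]

instance piLieRing : LieRing (ℕ → g) where
  bracket f h := fun i => ⁅f i, h i⁆
  add_lie f h k := by funext i; exact add_lie _ _ _
  lie_add f h k := by funext i; exact lie_add _ _ _
  lie_self f := by funext i; exact lie_self _
  leibniz_lie f h k := by funext i; exact leibniz_lie _ _ _

instance piLieAlgebra : LieAlgebra ℂ (ℕ → g) where
  lie_smul c f h := by funext i; exact lie_smul _ _ _

/-- `U(g)^{⊗ℕ}`: the enveloping algebra of the direct-sum Lie algebra. -/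
noncomputable abbrev Env := UniversalEnvelopingAlgebra ℂ (ℕ → g)

/-- placement of `x ∈ g` in slot `i`. -/
noncomputable def sl (i : ℕ) : g →ₗ[ℂ] Env g :=
  (UniversalEnvelopingAlgebra.ι ℂ).toLinearMap ∘ₗ LinearMap.single ℂ (fun _ : ℕ => g) i

/-- triple product map `x ⊗ y ⊗ z ↦ x^{(i)} y^{(j)} z^{(k)}`. -/
noncomputable def place3 (i j k : ℕ) : g ⊗[ℂ] (g ⊗[ℂ] g) →ₗ[ℂ] Env g :=
  TensorProduct.lift
    ((TensorProduct.lift.equiv (RingHom.id ℂ) g g (Env g)).toLinearMap ∘ₗ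
      ((((LinearMap.mul ℂ (Env g)).compr₂ (LinearMap.mul ℂ (Env g))) ∘ₗ sl g i).compl₂
          (sl g j)).compr₂
        ((LinearMap.llcomp ℂ g (Env g) (Env g)).flip (sl g k)))

/-- the algebra automorphism of `U(⊕ℕ g)` permuting the slots by `σ`. -/
noncomputable def permAlg (σ : Equiv.Perm ℕ) : Env g →ₐ[ℂ] Env g :=
  UniversalEnvelopingAlgebra.lift ℂ
    ((UniversalEnvelopingAlgebra.ι ℂ).comp
      ({ toFun := fun f => f ∘ σ
         map_add' := fun _ _ => rfl
         map_smul' := fun _ _ => rfl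
         map_lie' := rfl } : (ℕ → g) →ₗ⁅ℂ⁆ (ℕ → g)))

/-- the slots `1,…,m` (0-indexed) as a subtype of `ℕ`. -/
def embIv (m : ℕ) : Fin m ≃ {k : ℕ // 1 ≤ k ∧ k ≤ m} where
  toFun i := ⟨i.val + 1, by omega⟩
  invFun k := ⟨k.val - 1, by have := k.2; omega⟩
  left_inv i := by apply Fin.ext; simp
  right_inv k := by apply Subtype.ext; have := k.2.1; simp; omega

/-- the nested commutator `[Z^{1,2,3},[Z^{3,4,5},[…,Z^{2n-1,2n,2n+1}]…]]`
(0-indexed slots). -/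
noncomputable def nst (Z : g ⊗[ℂ] (g ⊗[ℂ] g)) (n : ℕ) : Env g :=
  (List.range (n - 1)).foldr
    (fun j acc => ⁅place3 g (2 * j) (2 * j + 1) (2 * j + 2) Z, acc⁆)
    (place3 g (2 * (n - 1)) (2 * (n - 1) + 1) (2 * (n - 1) + 2) Z)

/-- `Z_n`: the symmetrization of `nst` over the `2n-1` middle slots. -/
noncomputable def Ztens (Z : g ⊗[ℂ] (g ⊗[ℂ] g)) (n : ℕ) : Env g :=
  (((2 * n - 1).factorial : ℂ))⁻¹ •
    ∑ σ : Equiv.Perm (Fin (2 * n - 1)),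
      permAlg g (σ.extendDomain (embIv (2 * n - 1))) (nst g Z n)

noncomputable def swap12 : g ⊗[ℂ] (g ⊗[ℂ] g) ≃ₗ[ℂ] g ⊗[ℂ] (g ⊗[ℂ] g) :=
  (TensorProduct.assoc ℂ g g g).symm ≪≫ₗ
    (TensorProduct.congr (TensorProduct.comm ℂ g g) (LinearEquiv.refl ℂ g)) ≪≫ₗ
    TensorProduct.assoc ℂ g g g

noncomputable def swap23 : g ⊗[ℂ] (g ⊗[ℂ] g) ≃ₗ[ℂ] g ⊗[ℂ] (g ⊗[ℂ] g) :=
  TensorProduct.congr (LinearEquiv.refl ℂ g) (TensorProduct.comm ℂ g g)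

noncomputable def adT (x : g) : g ⊗[ℂ] (g ⊗[ℂ] g) →ₗ[ℂ] g ⊗[ℂ] (g ⊗[ℂ] g) :=
  LinearMap.rTensor (g ⊗[ℂ] g) ((LieAlgebra.ad ℂ g x : Module.End ℂ g) : g →ₗ[ℂ] g)
    + LinearMap.lTensor g
        (LinearMap.rTensor g ((LieAlgebra.ad ℂ g x : Module.End ℂ g) : g →ₗ[ℂ] g))
    + LinearMap.lTensor g
        (LinearMap.lTensor g ((LieAlgebra.ad ℂ g x : Module.End ℂ g) : g →ₗ[ℂ] g))


set_option linter.unusedSectionVars false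

namespace Stmt0Aux

variable {L : Type*} [LieRing L] [LieAlgebra ℂ L]

/-- right-nested bracket `[B 0, [B 1, …, [B (m-1), c]]]`. -/
def nestB : (ℕ → L) → L → ℕ → L
  | _, c, 0 => c
  | B, c, (m+1) => ⁅B 0, nestB (fun j => B (j+1)) c m⁆

@[simp] lemma nestB_zero (B : ℕ → L) (c : L) : nestB B c 0 = c := rfl

lemma nestB_succ (B : ℕ → L) (c : L) (m : ℕ) :
    nestB B c (m+1) = ⁅B 0, nestB (fun j => B (j+1)) c m⁆ := rfl

lemma nestB_congr {B B' : ℕ → L} {c c' : L} : ∀ {m : ℕ}, (∀ j < m, B j = B' j) → c = c' →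
    nestB B c m = nestB B' c' m := by
  intro m
  induction m generalizing B B' c c' with
  | zero => intro _ h; simpa using h
  | succ m ih =>
    intro hB hc
    rw [nestB_succ, nestB_succ, hB 0 (Nat.succ_pos m),
      ih (fun j hj => hB (j+1) (by omega)) hc]

lemma nestB_smul (B : ℕ → L) (c : ℂ) (x : L) : ∀ m, nestB B (c • x) m = c • nestB B x m := by
  intro m
  induction m generalizing B with
  | zero => simp
  | succ m ih => rw [nestB_succ, nestB_succ, ih, lie_smul]

lemma nestB_neg (B : ℕ → L) (x : L) : ∀ m, nestB B (-x) m = - nestB B x m := by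
  intro m
  induction m generalizing B with
  | zero => simp
  | succ m ih => rw [nestB_succ, nestB_succ, ih, lie_neg]

lemma nestB_negB (B : ℕ → L) (c : L) : ∀ m, nestB (fun j => -(B j)) c m = ((-1:ℂ)^m) • nestB B c m := by
  intro m
  induction m generalizing B c with
  | zero => simp
  | succ m ih =>
    rw [nestB_succ, nestB_succ]
    have : (fun j => (fun j => -(B j)) (j+1)) = fun j => -((fun j => B (j+1)) j) := rfl
    rw [this, ih, neg_lie, lie_smul, ← neg_smul, pow_succ]
    congr 1
    ring

lemma nestB_push (x : L) : ∀ (m : ℕ) (B : ℕ → L) (c : L), (∀ j < m, ⁅x, B j⁆ = 0) →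
    ⁅x, nestB B c m⁆ = nestB B ⁅x, c⁆ m := by
  intro m
  induction m with
  | zero => intro B c _; simp
  | succ m ih =>
    intro B c h
    rw [nestB_succ, nestB_succ, leibniz_lie, h 0 (Nat.succ_pos m), zero_lie, zero_add,
      ih _ c (fun j hj => h (j+1) (by omega))]

lemma nestB_absorb (B : ℕ → L) (c : L) : ∀ m, nestB B ⁅B m, c⁆ m = nestB B c (m+1) := by
  intro m
  induction m generalizing B c with
  | zero => simp [nestB_succ]
  | succ m ih =>
    rw [nestB_succ, nestB_succ (c := c)]
    have := ih (fun j => B (j+1)) c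
    rw [show (B (m+1)) = (fun j => B (j+1)) m from rfl, this]

lemma nestB_rev (B : ℕ → L) (m : ℕ)
    (hB : ∀ i j, j ≤ m → i + 2 ≤ j → ⁅B j, B i⁆ = 0) :
    nestB (fun j => B (m - j)) (B 0) m = ((-1:ℂ)^m) • nestB B (B m) m := by
  induction m with
  | zero => simp
  | succ m ih =>
    rw [nestB_succ]
    have h1 : (fun j => (fun j => B (m + 1 - j)) (j+1)) = fun j => B (m - j) := by
      funext j; simp only []; congr 1; omega
    rw [h1]
    have h2 := ih (fun i j hj h2 => hB i j (by omega) h2)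
    simp only [Nat.sub_zero] at h2 ⊢
    have hpush : ∀ j, j < m → ⁅B (m+1), B j⁆ = 0 := by
      intro j hj; exact hB j (m+1) le_rfl (by omega)
    rw [h2, lie_smul, nestB_push (B (m+1)) m B (B m) hpush]
    rw [← lie_skew (B (m+1)) (B m), nestB_neg, nestB_absorb]
    rw [smul_neg, ← neg_smul]
    congr 1
    rw [pow_succ]
    ring

end Stmt0Aux

namespace Stmt0Aux

set_option linter.unusedSectionVars false

variable (g : Type*) [LieRing g] [LieAlgebra ℂ g]

lemma permAlg_ι (σ : Equiv.Perm ℕ) (f : ℕ → g) :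
    permAlg g σ (UniversalEnvelopingAlgebra.ι ℂ f) = UniversalEnvelopingAlgebra.ι ℂ (f ∘ σ) :=
  UniversalEnvelopingAlgebra.lift_ι_apply ℂ _ f

lemma permAlg_sl (σ : Equiv.Perm ℕ) (i : ℕ) (x : g) :
    permAlg g σ (sl g i x) = sl g (σ⁻¹ i) x := by
  simp only [sl, LinearMap.coe_comp, LieHom.coe_toLinearMap, Function.comp_apply]
  rw [permAlg_ι]
  congr 1
  funext m
  show (Pi.single i x : ℕ → g) (σ m) = (Pi.single (σ⁻¹ i) x : ℕ → g) m
  rcases eq_or_ne m (σ⁻¹ i) with rfl | hm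
  · rw [show σ (σ⁻¹ i) = i from Equiv.apply_symm_apply σ i, Pi.single_eq_same (M := fun _ : ℕ => g) i x,
      Pi.single_eq_same (M := fun _ : ℕ => g) (σ⁻¹ i) x]
  · rw [show ((Pi.single (σ⁻¹ i) x : ℕ → g) m) = 0 from Pi.single_eq_of_ne (M := fun _ : ℕ => g) hm x,
      show ((Pi.single i x : ℕ → g) (σ m)) = 0 from Pi.single_eq_of_ne (M := fun _ : ℕ => g) (fun hc => hm (by simp [← hc])) x]

lemma lie_sl (i j : ℕ) (x y : g) (h : i ≠ j) : ⁅sl g i x, sl g j y⁆ = 0 := by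
  have h0 : ⁅(Pi.single i x : ℕ → g), (Pi.single j y : ℕ → g)⁆ = (0 : ℕ → g) := by
    funext m
    show ⁅(Pi.single i x : ℕ → g) m, (Pi.single j y : ℕ → g) m⁆ = (0 : g)
    rcases eq_or_ne m j with rfl | hm
    · rw [show ((Pi.single i x : ℕ → g) m) = 0 from Pi.single_eq_of_ne (M := fun _ : ℕ => g) (Ne.symm h) x, zero_lie]
    · rw [show ((Pi.single j y : ℕ → g) m) = 0 from Pi.single_eq_of_ne (M := fun _ : ℕ => g) hm y, lie_zero]
  have := (UniversalEnvelopingAlgebra.ι ℂ (L := ℕ → g)).map_lie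
    (x := (Pi.single i x : ℕ → g)) (y := (Pi.single j y : ℕ → g))
  rw [h0] at this
  show ⁅(UniversalEnvelopingAlgebra.ι ℂ) (Pi.single i x : ℕ → g),
        (UniversalEnvelopingAlgebra.ι ℂ) (Pi.single j y : ℕ → g)⁆ = 0
  rw [← this]
  exact map_zero _

lemma commute_sl (i j : ℕ) (x y : g) (h : i ≠ j) : Commute (sl g i x) (sl g j y) := by
  have := lie_sl g i j x y h
  rw [Ring.lie_def, sub_eq_zero] at this
  exact this

lemma place3_tmul (i j k : ℕ) (x y z : g) :
    place3 g i j k (x ⊗ₜ[ℂ] (y ⊗ₜ[ℂ] z)) = sl g i x * sl g j y * sl g k z := by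
  simp [place3, TensorProduct.lift.tmul, LinearMap.compr₂_apply, LinearMap.compl₂_apply,
    LinearMap.mul_apply', LinearMap.llcomp_apply, LinearMap.flip_apply,
    TensorProduct.lift.equiv_apply]

lemma tind (P : g ⊗[ℂ] (g ⊗[ℂ] g) → Prop) (h0 : P 0)
    (hadd : ∀ a b, P a → P b → P (a + b))
    (hp : ∀ x y z : g, P (x ⊗ₜ[ℂ] (y ⊗ₜ[ℂ] z))) : ∀ Wv : g ⊗[ℂ] (g ⊗[ℂ] g), P Wv := by
  intro W
  induction W using TensorProduct.induction_on with
  | zero => exact h0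
  | tmul x w =>
    induction w using TensorProduct.induction_on with
    | zero => rw [TensorProduct.tmul_zero]; exact h0
    | tmul y z => exact hp x y z
    | add a b ha hb => rw [TensorProduct.tmul_add]; exact hadd _ _ ha hb
  | add a b ha hb => exact hadd a b ha hb

lemma swap12_tmul (x y z : g) :
    swap12 g (x ⊗ₜ[ℂ] (y ⊗ₜ[ℂ] z)) = y ⊗ₜ[ℂ] (x ⊗ₜ[ℂ] z) := by
  simp [swap12]

lemma swap23_tmul (x y z : g) :
    swap23 g (x ⊗ₜ[ℂ] (y ⊗ₜ[ℂ] z)) = x ⊗ₜ[ℂ] (z ⊗ₜ[ℂ] y) := by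
  simp [swap23]

lemma place3_swap12 (i j k : ℕ) (h : i ≠ j) (W : g ⊗[ℂ] (g ⊗[ℂ] g)) :
    place3 g i j k (swap12 g W) = place3 g j i k W := by
  induction W using tind with
  | h0 => simp
  | hadd a b ha hb => rw [map_add, map_add, map_add, ha, hb]
  | hp x y z =>
    rw [swap12_tmul, place3_tmul, place3_tmul, (commute_sl g i j y x h).eq]

lemma place3_swap23 (i j k : ℕ) (h : j ≠ k) (W : g ⊗[ℂ] (g ⊗[ℂ] g)) :
    place3 g i j k (swap23 g W) = place3 g i k j W := by
  induction W using tind with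
  | h0 => simp
  | hadd a b ha hb => rw [map_add, map_add, map_add, ha, hb]
  | hp x y z =>
    rw [swap23_tmul, place3_tmul, place3_tmul, mul_assoc, mul_assoc,
      (commute_sl g j k z y h).eq]

lemma place3_rev (Z : g ⊗[ℂ] (g ⊗[ℂ] g))
    (hanti12 : swap12 g Z = -Z) (hanti23 : swap23 g Z = -Z) (a : ℕ) :
    place3 g (a+2) (a+1) a Z = - place3 g a (a+1) (a+2) Z := by
  have e1 : place3 g (a+2) (a+1) a Z = - place3 g (a+1) (a+2) a Z := by
    rw [← place3_swap12 g (a+1) (a+2) a (by omega) Z, hanti12, map_neg]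
  have e2 : place3 g (a+1) (a+2) a Z = - place3 g (a+1) a (a+2) Z := by
    rw [← place3_swap23 g (a+1) a (a+2) (by omega) Z, hanti23, map_neg]
  have e3 : place3 g (a+1) a (a+2) Z = - place3 g a (a+1) (a+2) Z := by
    rw [← place3_swap12 g a (a+1) (a+2) (by omega) Z, hanti12, map_neg]
  rw [e1, e2, e3, neg_neg]

lemma commute_place3 (i j k i' j' k' : ℕ)
    (h : ∀ a b : ℕ, (a = i ∨ a = j ∨ a = k) → (b = i' ∨ b = j' ∨ b = k') → a ≠ b)
    (W W' : g ⊗[ℂ] (g ⊗[ℂ] g)) :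
    Commute (place3 g i j k W) (place3 g i' j' k' W') := by
  induction W using tind with
  | h0 => rw [map_zero]; exact Commute.zero_left _
  | hadd a b ha hb => rw [map_add]; exact ha.add_left hb
  | hp x y z =>
    induction W' using tind with
    | h0 => rw [map_zero]; exact Commute.zero_right _
    | hadd a b ha hb => rw [map_add]; exact ha.add_right hb
    | hp x' y' z' =>
      rw [place3_tmul, place3_tmul]
      have c : ∀ (a : ℕ) (u : g), (a = i ∨ a = j ∨ a = k) →
          Commute (sl g a u) (sl g i' x' * sl g j' y' * sl g k' z') := by
        intro a u ha
        exact ((commute_sl g a i' u x' (h a i' ha (Or.inl rfl))).mul_right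
          (commute_sl g a j' u y' (h a j' ha (Or.inr (Or.inl rfl))))).mul_right
          (commute_sl g a k' u z' (h a k' ha (Or.inr (Or.inr rfl))))
      exact ((c i x (Or.inl rfl)).mul_left (c j y (Or.inr (Or.inl rfl)))).mul_left
        (c k z (Or.inr (Or.inr rfl)))

lemma permAlg_place3 (σ : Equiv.Perm ℕ) (i j k : ℕ) (W : g ⊗[ℂ] (g ⊗[ℂ] g)) :
    permAlg g σ (place3 g i j k W) = place3 g (σ⁻¹ i) (σ⁻¹ j) (σ⁻¹ k) W := by
  induction W using tind with
  | h0 => rw [map_zero, map_zero, map_zero]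
  | hadd a b ha hb => rw [map_add, map_add, map_add, ha, hb]
  | hp x y z =>
    rw [place3_tmul, map_mul, map_mul, permAlg_sl, permAlg_sl, permAlg_sl, place3_tmul]

lemma permAlg_permAlg (α β : Equiv.Perm ℕ) (x : Env g) :
    permAlg g β (permAlg g α x) = permAlg g (α * β) x := by
  have : ((permAlg g β).comp (permAlg g α)) = permAlg g (α * β) := by
    ext f
    show permAlg g β (permAlg g α (UniversalEnvelopingAlgebra.ι ℂ f))
      = permAlg g (α * β) (UniversalEnvelopingAlgebra.ι ℂ f)
    rw [permAlg_ι, permAlg_ι, permAlg_ι]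
    rfl
  exact DFunLike.congr_fun this x

lemma algHom_lie {A B : Type*} [Ring A] [Ring B] [Algebra ℂ A] [Algebra ℂ B]
    (φ : A →ₐ[ℂ] B) (x y : A) : φ ⁅x, y⁆ = ⁅φ x, φ y⁆ := by
  simp [Ring.lie_def]

lemma nestB_map {A B : Type*} [Ring A] [Ring B] [Algebra ℂ A] [Algebra ℂ B]
    (φ : A →ₐ[ℂ] B) (F : ℕ → A) (c : A) : ∀ m, φ (nestB F c m) = nestB (fun j => φ (F j)) (φ c) m := by
  intro m
  induction m generalizing F c with
  | zero => simp
  | succ m ih => rw [nestB_succ, nestB_succ, algHom_lie, ih]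

lemma foldr_eq_nestB {L : Type*} [LieRing L] [LieAlgebra ℂ L] (B : ℕ → L) : ∀ m : ℕ,
    (List.range m).foldr (fun j acc => ⁅B j, acc⁆) (B m) = nestB B (B m) m := by
  intro m
  induction m generalizing B with
  | zero => simp [nestB]
  | succ m ih =>
    rw [List.range_succ_eq_map, List.foldr_cons, List.foldr_map, nestB_succ]
    exact congrArg _ (ih (fun j => B (j+1)))

end Stmt0Aux

namespace Stmt0Aux

/-- abbreviation for extended permutations on the middle slots. -/
noncomputable def extP (m : ℕ) (σ : Equiv.Perm (Fin m)) : Equiv.Perm ℕ :=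
  σ.extendDomain (embIv m)

lemma extP_not_mid (m : ℕ) (σ : Equiv.Perm (Fin m)) (x : ℕ) (h : ¬(1 ≤ x ∧ x ≤ m)) :
    extP m σ x = x :=
  Equiv.Perm.extendDomain_apply_not_subtype σ (embIv m) h

lemma extP_mid (m : ℕ) (σ : Equiv.Perm (Fin m)) (x : ℕ) (h : 1 ≤ x ∧ x ≤ m) :
    1 ≤ extP m σ x ∧ extP m σ x ≤ m := by
  rw [extP, Equiv.Perm.extendDomain_apply_subtype σ (embIv m) h]
  exact ((embIv m) (σ ((embIv m).symm ⟨x, h⟩))).2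

lemma extP_rev_mid (m : ℕ) (x : ℕ) (h : 1 ≤ x ∧ x ≤ m) :
    extP m Fin.revPerm x = m + 1 - x := by
  rw [extP, Equiv.Perm.extendDomain_apply_subtype _ (embIv m) h]
  show ((embIv m) (Fin.revPerm ((embIv m).symm ⟨x, h⟩))).1 = m + 1 - x
  simp only [embIv, Equiv.coe_fn_mk, Equiv.coe_fn_symm_mk, Fin.revPerm_apply]
  show (((embIv m).symm ⟨x, h⟩).rev : ℕ) + 1 = m + 1 - x
  have : (((embIv m).symm ⟨x, h⟩).rev : ℕ) = m - ((x - 1) + 1) := rfl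
  rw [this]
  omega

lemma extP_rev_inv (m : ℕ) : (extP m Fin.revPerm)⁻¹ = extP m Fin.revPerm := by
  rw [extP, Equiv.Perm.extendDomain_inv]
  rfl

lemma swap_comm_extP (m n : ℕ) (hm : m + 1 = 2 * n) (σ : Equiv.Perm (Fin m)) :
    Equiv.swap 0 (2*n) * extP m σ = extP m σ * Equiv.swap 0 (2*n) := by
  have hn : 1 ≤ n := by omega
  ext x
  show Equiv.swap 0 (2*n) (extP m σ x) = extP m σ (Equiv.swap 0 (2*n) x)
  by_cases h0 : x = 0
  · subst h0
    rw [extP_not_mid m σ 0 (by omega), Equiv.swap_apply_left,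
      extP_not_mid m σ (2*n) (by omega)]
  by_cases h2n : x = 2*n
  · subst h2n
    rw [extP_not_mid m σ (2*n) (by omega), Equiv.swap_apply_right,
      extP_not_mid m σ 0 (by omega)]
  rw [Equiv.swap_apply_of_ne_of_ne h0 h2n]
  by_cases hmid : 1 ≤ x ∧ x ≤ m
  · have := extP_mid m σ x hmid
    rw [Equiv.swap_apply_of_ne_of_ne (by omega) (by omega)]
  · rw [extP_not_mid m σ x hmid, Equiv.swap_apply_of_ne_of_ne h0 h2n]

lemma key_perm (m n : ℕ) (hm : m + 1 = 2 * n) (σ : Equiv.Perm (Fin m)) :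
    extP m σ * Equiv.swap 0 (2*n)
      = (Equiv.swap 0 (2*n) * extP m Fin.revPerm) * extP m (Fin.revPerm⁻¹ * σ) := by
  have h1 : extP m (Fin.revPerm⁻¹ * σ) = (extP m Fin.revPerm)⁻¹ * extP m σ := by
    rw [extP_rev_inv, show (Fin.revPerm : Equiv.Perm (Fin m))⁻¹ = Fin.revPerm from rfl,
      extP, extP, extP, Equiv.Perm.extendDomain_mul]
  rw [h1, ← swap_comm_extP m n hm σ]
  group

end Stmt0Aux

namespace Stmt0Aux

lemma tau_inv_apply (m n : ℕ) (hm : m + 1 = 2 * n) (x : ℕ) (hx : x ≤ 2 * n) :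
    (Equiv.swap 0 (2*n) * extP m Fin.revPerm)⁻¹ x = 2 * n - x := by
  rw [mul_inv_rev, extP_rev_inv]
  show extP m Fin.revPerm ((Equiv.swap 0 (2*n))⁻¹ x) = 2 * n - x
  rw [Equiv.swap_inv]
  by_cases h0 : x = 0
  · subst h0
    rw [Equiv.swap_apply_left, extP_not_mid m _ (2*n) (by omega)]
    omega
  by_cases h2 : x = 2*n
  · subst h2
    rw [Equiv.swap_apply_right, extP_not_mid m _ 0 (by omega)]
    omega
  · rw [Equiv.swap_apply_of_ne_of_ne h0 h2, extP_rev_mid m x (by omega)]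
    omega

lemma key_perm' (m n : ℕ) (hm : m + 1 = 2 * n) (σ : Equiv.Perm (Fin m)) :
    σ.extendDomain (embIv m) * Equiv.swap 0 (2*n)
      = (Equiv.swap 0 (2*n) * extP m Fin.revPerm) * extP m (Fin.revPerm⁻¹ * σ) :=
  key_perm m n hm σ

end Stmt0Aux

open Stmt0Aux

theorem stmt_0 (Z : g ⊗[ℂ] (g ⊗[ℂ] g))
    (hanti12 : swap12 g Z = -Z) (hanti23 : swap23 g Z = -Z)
    (hinv : ∀ x : g, adT g x Z = 0)
    (n : ℕ) (hn : 1 ≤ n) :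
    permAlg g (Equiv.swap 0 (2 * n)) (Ztens g Z n) = -Ztens g Z n := by
  classical
  have hτnst : permAlg g (Equiv.swap 0 (2*n) * extP (2*n-1) Fin.revPerm) (nst g Z n)
      = -(nst g Z n) := by
    have hnst : nst g Z n = nestB (fun j => place3 g (2*j) (2*j+1) (2*j+2) Z)
        (place3 g (2*(n-1)) (2*(n-1)+1) (2*(n-1)+2) Z) (n-1) := foldr_eq_nestB _ _
    have hAj : ∀ j, j ≤ n-1 →
        permAlg g (Equiv.swap 0 (2*n) * extP (2*n-1) Fin.revPerm)
          (place3 g (2*j) (2*j+1) (2*j+2) Z)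
        = -(place3 g (2*(n-1-j)) (2*(n-1-j)+1) (2*(n-1-j)+2) Z) := by
      intro j hj
      rw [permAlg_place3, tau_inv_apply (2*n-1) n (by omega) (2*j) (by omega),
        tau_inv_apply (2*n-1) n (by omega) (2*j+1) (by omega),
        tau_inv_apply (2*n-1) n (by omega) (2*j+2) (by omega),
        show 2*n - 2*j = 2*(n-1-j)+2 from by omega,
        show 2*n - (2*j+1) = 2*(n-1-j)+1 from by omega,
        show 2*n - (2*j+2) = 2*(n-1-j) from by omega]
      exact place3_rev g Z hanti12 hanti23 _
    have hfar : ∀ i j : ℕ, j ≤ n-1 → i + 2 ≤ j →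
        ⁅place3 g (2*j) (2*j+1) (2*j+2) Z, place3 g (2*i) (2*i+1) (2*i+2) Z⁆ = 0 := by
      intro i j _ hij
      rw [Ring.lie_def, sub_eq_zero]
      exact (commute_place3 g (2*j) (2*j+1) (2*j+2) (2*i) (2*i+1) (2*i+2)
        (by intro a b ha hb
            rcases ha with rfl|rfl|rfl <;> rcases hb with rfl|rfl|rfl <;> omega) Z Z).eq
    rw [hnst]
    rw [nestB_map]
    have step1 : nestB
        (fun j => permAlg g (Equiv.swap 0 (2*n) * extP (2*n-1) Fin.revPerm)
          (place3 g (2*j) (2*j+1) (2*j+2) Z))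
        (permAlg g (Equiv.swap 0 (2*n) * extP (2*n-1) Fin.revPerm)
          (place3 g (2*(n-1)) (2*(n-1)+1) (2*(n-1)+2) Z)) (n-1)
        = nestB (fun j => -(place3 g (2*(n-1-j)) (2*(n-1-j)+1) (2*(n-1-j)+2) Z))
          (-(place3 g (2*0) (2*0+1) (2*0+2) Z)) (n-1) :=
      nestB_congr (fun j hj => hAj j (by omega))
        (by rw [hAj (n-1) le_rfl, show n-1-(n-1) = 0 from by omega])
    rw [step1, nestB_negB, nestB_neg,
      nestB_rev (fun j => place3 g (2*j) (2*j+1) (2*j+2) Z) (n-1)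
        (fun i j hj h2 => hfar i j hj h2),
      smul_neg, smul_smul, ← pow_add, Even.neg_one_pow ⟨n-1, rfl⟩, one_smul]
  have key : ∀ σ : Equiv.Perm (Fin (2*n-1)),
      permAlg g (Equiv.swap 0 (2*n))
        (permAlg g (σ.extendDomain (embIv (2*n-1))) (nst g Z n))
        = -(permAlg g (extP (2*n-1) (Fin.revPerm⁻¹ * σ)) (nst g Z n)) := by
    intro σ
    rw [permAlg_permAlg, key_perm' (2*n-1) n (by omega) σ, ← permAlg_permAlg, hτnst, map_neg]
  simp only [Ztens]
  rw [map_smul, map_sum]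
  have e1 : (∑ σ : Equiv.Perm (Fin (2*n-1)),
        permAlg g (Equiv.swap 0 (2*n))
          (permAlg g (σ.extendDomain (embIv (2*n-1))) (nst g Z n)))
      = ∑ σ : Equiv.Perm (Fin (2*n-1)),
          -(permAlg g (extP (2*n-1) (Fin.revPerm⁻¹ * σ)) (nst g Z n)) :=
    Finset.sum_congr rfl (fun σ _ => key σ)
  have e2 : (∑ σ : Equiv.Perm (Fin (2*n-1)),
        permAlg g (extP (2*n-1) (Fin.revPerm⁻¹ * σ)) (nst g Z n))
      = ∑ σ : Equiv.Perm (Fin (2*n-1)),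
          permAlg g (σ.extendDomain (embIv (2*n-1))) (nst g Z n) :=
    Fintype.sum_equiv (Equiv.mulLeft Fin.revPerm) _ _ (fun σ => rfl)
  rw [e1, Finset.sum_neg_distrib, e2, smul_neg]
end

section
/- For all z ∈ ℂ that are not integers, lim_{N→∞} Σ_{p=-N}^{N} 1/(z - p) = π cot(π z). -/
open Filter Finset Metric

/-- Product bound: `∏ (1 + c j) ≤ exp (∑ c j)` for nonnegative `c`. -/
lemma aux_prod_le_exp (t : Finset ℕ) (c : ℕ → ℝ) (hc : ∀ j, 0 ≤ c j) :
    ∏ j ∈ t, (1 + c j) ≤ Real.exp (∑ j ∈ t, c j) := by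
  rw [Real.exp_sum]
  refine Finset.prod_le_prod (fun j _ => by have := hc j; linarith) (fun j _ => ?_)
  rw [add_comm]
  exact Real.add_one_le_exp _

lemma aux_norm_prod_le (t : Finset ℕ) (f : ℕ → ℂ) (c : ℕ → ℝ) (h : ∀ j ∈ t, ‖f j‖ ≤ c j) :
    ‖∏ j ∈ t, (1 + f j)‖ ≤ ∏ j ∈ t, (1 + c j) := by
  calc ‖∏ j ∈ t, (1 + f j)‖ ≤ ∏ j ∈ t, ‖1 + f j‖ := norm_prod_le _ _
  _ ≤ ∏ j ∈ t, (1 + c j) := by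
      refine Finset.prod_le_prod (fun j _ => norm_nonneg _) (fun j hj => ?_)
      calc ‖(1 : ℂ) + f j‖ ≤ ‖(1 : ℂ)‖ + ‖f j‖ := norm_add_le _ _
      _ ≤ 1 + c j := by simpa using h j hj

lemma aux_prod_sub_one (t : Finset ℕ) (f : ℕ → ℂ) (c : ℕ → ℝ) (h : ∀ j ∈ t, ‖f j‖ ≤ c j)
    (hc : ∀ j, 0 ≤ c j) :
    ‖∏ j ∈ t, (1 + f j) - 1‖ ≤ ∏ j ∈ t, (1 + c j) - 1 := by
  induction t using Finset.cons_induction with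
  | empty => simp
  | cons a s ha ih =>
    rw [Finset.forall_mem_cons] at h
    rw [Finset.prod_cons, Finset.prod_cons]
    have h1 : (1 + f a) * ∏ j ∈ s, (1 + f j) - 1
        = (∏ j ∈ s, (1 + f j) - 1) + f a * ∏ j ∈ s, (1 + f j) := by ring
    rw [h1]
    have h2 : ‖(∏ j ∈ s, (1 + f j) - 1) + f a * ∏ j ∈ s, (1 + f j)‖
        ≤ ‖∏ j ∈ s, (1 + f j) - 1‖ + ‖f a‖ * ‖∏ j ∈ s, (1 + f j)‖ := by
      simpa [norm_mul] using norm_add_le (∏ j ∈ s, (1 + f j) - 1) (f a * ∏ j ∈ s, (1 + f j))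
    have h3 : ‖∏ j ∈ s, (1 + f j) - 1‖ ≤ ∏ j ∈ s, (1 + c j) - 1 := ih h.2
    have h4 : ‖∏ j ∈ s, (1 + f j)‖ ≤ ∏ j ∈ s, (1 + c j) := aux_norm_prod_le s f c h.2
    have h5 : ‖f a‖ * ‖∏ j ∈ s, (1 + f j)‖ ≤ c a * ∏ j ∈ s, (1 + c j) :=
      mul_le_mul h.1 h4 (norm_nonneg _) (hc a)
    have : (1 + c a) * ∏ j ∈ s, (1 + c j) - 1
        = (∏ j ∈ s, (1 + c j) - 1) + c a * ∏ j ∈ s, (1 + c j) := by ring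
    rw [this]
    linarith

/- STATEMENT 9: For all non-integer `z ∈ ℂ`, the symmetric partial sums
`Σ_{p=-N}^{N} 1/(z-p)` converge to `π cot (π z)` as `N → ∞`. -/

theorem stmt_9 (z : ℂ) (hz : ∀ n : ℤ, z ≠ (n : ℂ)) :
    Filter.Tendsto
      (fun N : ℕ => ∑ p ∈ Finset.Icc (-(N : ℤ)) (N : ℤ), 1 / (z - (p : ℂ)))
      Filter.atTop
      (nhds ((Real.pi : ℂ) * Complex.cot ((Real.pi : ℂ) * z))) := by
  classical
  have hπ : (Real.pi : ℂ) ≠ 0 := by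
    exact_mod_cast Complex.ofReal_ne_zero.mpr Real.pi_ne_zero
  have hz0 : z ≠ 0 := by simpa using hz 0
  -- basic non-vanishing facts
  have hjC : ∀ j : ℕ, ((j : ℂ) + 1) ≠ 0 := by
    intro j h
    have h2 : ((j : ℝ) + 1) = 0 := by simpa using congrArg Complex.re h
    have h3 : (0 : ℝ) ≤ (j : ℝ) := Nat.cast_nonneg j
    linarith
  have hsub : ∀ j : ℕ, z - ((j : ℂ) + 1) ≠ 0 := by
    intro j h
    exact hz ((j : ℤ) + 1) (by push_cast; exact sub_eq_zero.mp h)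
  have hadd : ∀ j : ℕ, z + ((j : ℂ) + 1) ≠ 0 := by
    intro j h
    exact hz (-((j : ℤ) + 1)) (by push_cast; exact eq_neg_of_add_eq_zero_left h)
  have hfac : ∀ j : ℕ, (1 : ℂ) - z ^ 2 / ((j : ℂ) + 1) ^ 2 ≠ 0 := by
    intro j h
    have h2 : (z - ((j : ℂ) + 1)) * (z + ((j : ℂ) + 1)) = 0 := by
      have hc : ((j : ℂ) + 1) ^ 2 ≠ 0 := pow_ne_zero _ (hjC j)
      field_simp at h
      linear_combination -h
    rcases mul_eq_zero.mp h2 with h3 | h3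
    · exact hsub j h3
    · exact hadd j (by linear_combination h3)
  -- the approximating functions
  set F : ℕ → ℂ → ℂ :=
    fun n w => (Real.pi : ℂ) * w * ∏ j ∈ Finset.range n, (1 - w ^ 2 / ((j : ℂ) + 1) ^ 2) with hF
  set g : ℂ → ℂ := fun w => Complex.sin ((Real.pi : ℂ) * w) with hg
  -- uniform convergence data
  set R : ℝ := ‖z‖ + 1 with hR
  have hR0 : 0 < R := by positivity
  set u : ℕ → ℝ := fun j => R ^ 2 / ((j : ℝ) + 1) ^ 2 with hudef
  have hu_nonneg : ∀ j, 0 ≤ u j := fun j => by positivity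
  have hu : Summable u := by
    have h1 : Summable (fun j : ℕ => 1 / ((j : ℝ) + 1) ^ 2) := by
      have := (summable_nat_add_iff 1).mpr
        (Real.summable_one_div_nat_pow.mpr (by norm_num : 1 < 2))
      simpa [add_comm] using this
    simpa [hudef, div_eq_mul_inv, mul_comm] using h1.mul_left (R ^ 2)
  set K : ℝ := ∑' j, u j with hK
  have hK0 : 0 ≤ K := tsum_nonneg hu_nonneg
  set C : ℝ := Real.pi * R * Real.exp K + 1 with hC
  have hC0 : 0 < C := by positivity
  -- norm bounds for the factors
  have hnormfac : ∀ (x : ℂ) (j : ℕ), ‖x‖ ≤ R → ‖-(x ^ 2 / ((j : ℂ) + 1) ^ 2)‖ ≤ u j := by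
    intro x j hx
    have hjnorm : ‖((j : ℂ) + 1)‖ = (j : ℝ) + 1 := by
      rw [show ((j : ℂ) + 1) = ((j + 1 : ℕ) : ℂ) by push_cast; ring, Complex.norm_natCast]
      push_cast; ring
    rw [norm_neg, norm_div, norm_pow, norm_pow, hjnorm]
    have h2 : ‖x‖ ^ 2 ≤ R ^ 2 := by nlinarith [norm_nonneg x]
    have h3 : (0:ℝ) < ((j : ℝ) + 1) ^ 2 := by positivity
    calc ‖x‖ ^ 2 / ((j : ℝ) + 1) ^ 2 ≤ R ^ 2 / ((j : ℝ) + 1) ^ 2 :=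
          (div_le_div_iff_of_pos_right h3).mpr h2
    _ = u j := rfl
  -- key Cauchy estimate
  have hkey : ∀ m n : ℕ, m ≤ n → ∀ x : ℂ, ‖x‖ ≤ R →
      ‖F m x - F n x‖ ≤ C * (Real.exp (∑ j ∈ Finset.Ico m n, u j) - 1) := by
    intro m n hmn x hx
    have hfg : ∀ j : ℕ, (1 : ℂ) - x ^ 2 / ((j : ℂ) + 1) ^ 2
        = 1 + -(x ^ 2 / ((j : ℂ) + 1) ^ 2) := fun j => by ring
    have hsplit : F n x = F m x * ∏ j ∈ Finset.Ico m n, (1 + -(x ^ 2 / ((j : ℂ) + 1) ^ 2)) := by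
      simp only [hF, hfg]
      rw [← Finset.prod_range_mul_prod_Ico (fun j => (1 : ℂ) + -(x ^ 2 / ((j : ℂ) + 1) ^ 2)) hmn]
      ring
    have hFm : ‖F m x‖ ≤ Real.pi * R * Real.exp K := by
      have h1 : ‖F m x‖ = Real.pi * ‖x‖ *
          ‖∏ j ∈ Finset.range m, (1 + -(x ^ 2 / ((j : ℂ) + 1) ^ 2))‖ := by
        simp [hF, hfg, norm_mul, Complex.norm_real, abs_of_nonneg Real.pi_pos.le,
          Real.norm_eq_abs]
      rw [h1]
      have h2a := aux_norm_prod_le (Finset.range m) (fun j => -(x ^ 2 / ((j : ℂ) + 1) ^ 2)) u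
        (fun j _ => hnormfac x j hx)
      have h2b := aux_prod_le_exp (Finset.range m) u hu_nonneg
      have h2c : ∑ j ∈ Finset.range m, u j ≤ K :=
        Summable.sum_le_tsum _ (fun j _ => hu_nonneg j) hu
      have h2d := Real.exp_le_exp.mpr h2c
      have hb : ‖∏ j ∈ Finset.range m, (1 + -(x ^ 2 / ((j : ℂ) + 1) ^ 2))‖ ≤ Real.exp K :=
        (h2a.trans h2b).trans h2d
      have hπx : Real.pi * ‖x‖ ≤ Real.pi * R := by nlinarith [Real.pi_pos]
      exact mul_le_mul hπx hb (norm_nonneg _) (by positivity)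
    have hQ : ‖∏ j ∈ Finset.Ico m n, (1 + -(x ^ 2 / ((j : ℂ) + 1) ^ 2)) - 1‖
        ≤ Real.exp (∑ j ∈ Finset.Ico m n, u j) - 1 := by
      have hq1 := aux_prod_sub_one (Finset.Ico m n) (fun j => -(x ^ 2 / ((j : ℂ) + 1) ^ 2)) u
        (fun j _ => hnormfac x j hx) hu_nonneg
      have hq2 := aux_prod_le_exp (Finset.Ico m n) u hu_nonneg
      have := hq1
      linarith
    have heq : F m x - F n x
        = -(F m x * (∏ j ∈ Finset.Ico m n, (1 + -(x ^ 2 / ((j : ℂ) + 1) ^ 2)) - 1)) := by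
      rw [hsplit]; ring
    rw [heq, norm_neg, norm_mul]
    have hQ0 : (0:ℝ) ≤ Real.exp (∑ j ∈ Finset.Ico m n, u j) - 1 := by
      have : (0:ℝ) ≤ ∑ j ∈ Finset.Ico m n, u j := Finset.sum_nonneg fun j _ => hu_nonneg j
      have := Real.one_le_exp this
      linarith
    have hmm : ‖F m x‖ * ‖∏ j ∈ Finset.Ico m n, (1 + -(x ^ 2 / ((j : ℂ) + 1) ^ 2)) - 1‖
        ≤ (Real.pi * R * Real.exp K) * (Real.exp (∑ j ∈ Finset.Ico m n, u j) - 1) :=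
      mul_le_mul hFm hQ (norm_nonneg _) (by positivity)
    have hCk : Real.pi * R * Real.exp K ≤ C := by rw [hC]; linarith
    have hfin := mul_le_mul_of_nonneg_right hCk hQ0
    exact hmm.trans hfin
  -- any point of the unit ball around z has norm ≤ R
  have hball_norm : ∀ x ∈ Metric.ball z 1, ‖x‖ ≤ R := by
    intro x hx
    have : ‖x - z‖ < 1 := by simpa [Metric.mem_ball, dist_eq_norm] using hx
    calc ‖x‖ = ‖z + (x - z)‖ := by ring_nf
    _ ≤ ‖z‖ + ‖x - z‖ := norm_add_le _ _
    _ ≤ R := by rw [hR]; linarith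
  -- uniform Cauchy property
  have hcauchy : UniformCauchySeqOn F atTop (Metric.ball z 1) := by
    rw [Metric.uniformCauchySeqOn_iff]
    intro ε hε
    set δ : ℝ := Real.log (1 + ε / (2 * C)) with hδdef
    have hpos : 0 < ε / (2 * C) := by positivity
    have hδ : 0 < δ := Real.log_pos (by linarith)
    obtain ⟨s₀, hs₀⟩ := summable_iff_vanishing.mp hu (Set.Iio δ) (Iio_mem_nhds hδ)
    refine ⟨s₀.sup id + 1, ?_⟩
    intro m hm n hn x hx
    have hdisjoint : ∀ a b : ℕ, s₀.sup id + 1 ≤ a → Disjoint (Finset.Ico a b) s₀ := by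
      intro a b ha
      rw [Finset.disjoint_left]
      intro j hj hj'
      have h1 : a ≤ j := (Finset.mem_Ico.mp hj).1
      have h2 : j ≤ s₀.sup id := Finset.le_sup (f := id) hj'
      omega
    have hbound : ∀ a b : ℕ, s₀.sup id + 1 ≤ a → a ≤ b → ∀ y : ℂ, ‖y‖ ≤ R →
        ‖F a y - F b y‖ < ε := by
      intro a b ha hab y hy
      have hlt : ∑ j ∈ Finset.Ico a b, u j < δ := hs₀ _ (hdisjoint a b ha)
      have h1 : ‖F a y - F b y‖ ≤ C * (Real.exp (∑ j ∈ Finset.Ico a b, u j) - 1) :=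
        hkey a b hab y hy
      have h2 : Real.exp (∑ j ∈ Finset.Ico a b, u j) ≤ Real.exp δ :=
        Real.exp_le_exp.mpr hlt.le
      have h3 : Real.exp δ = 1 + ε / (2 * C) := Real.exp_log (by linarith)
      have h4 : Real.exp (∑ j ∈ Finset.Ico a b, u j) - 1 ≤ ε / (2 * C) := by
        rw [h3] at h2; linarith
      have h5 : ‖F a y - F b y‖ ≤ C * (ε / (2 * C)) :=
        h1.trans (mul_le_mul_of_nonneg_left h4 hC0.le)
      have h6 : C * (ε / (2 * C)) = ε / 2 := by
        field_simp
      linarith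
    have hxR : ‖x‖ ≤ R := hball_norm x hx
    rcases le_total m n with h | h
    · rw [dist_eq_norm]; exact hbound m n hm h x hxR
    · rw [dist_comm, dist_eq_norm]; exact hbound n m hn h x hxR
  -- uniform convergence to sin (π w)
  have hF_unif : TendstoUniformlyOn F g atTop (Metric.ball z 1) := by
    apply hcauchy.tendstoUniformlyOn_of_tendsto
    intro x _
    exact Complex.tendsto_euler_sin_prod x
  have hF_loc : TendstoLocallyUniformlyOn F g atTop (Metric.ball z 1) :=
    hF_unif.tendstoLocallyUniformlyOn
  -- differentiability
  have hFdiff : ∀ n, DifferentiableOn ℂ (F n) (Metric.ball z 1) := by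
    intro n
    apply Differentiable.differentiableOn
    apply Differentiable.mul
    · exact (differentiable_id.const_mul _)
    · exact Differentiable.fun_finsetProd fun j _ =>
        (differentiable_const (1:ℂ)).sub ((differentiable_pow 2).div_const _)
  -- g z ≠ 0
  have hg0 : g z ≠ 0 := by
    rw [hg]
    rw [Complex.sin_ne_zero_iff]
    intro k hk
    apply hz k
    rw [mul_comm ((k : ℂ)) ((Real.pi : ℂ))] at hk
    exact mul_left_cancel₀ hπ hk
  -- logarithmic derivative of g
  have hglog : logDeriv g z = (Real.pi : ℂ) * Complex.cot ((Real.pi : ℂ) * z) := by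
    have h1 : HasDerivAt (fun w : ℂ => (Real.pi : ℂ) * w) ((Real.pi : ℂ)) z := by
      simpa using (hasDerivAt_id z).const_mul ((Real.pi : ℂ))
    have hd : HasDerivAt g (Complex.cos ((Real.pi : ℂ) * z) * (Real.pi : ℂ)) z := by
      simpa [hg, Function.comp_def] using
        (Complex.hasDerivAt_sin ((Real.pi : ℂ) * z)).comp z h1
    rw [logDeriv_apply, hd.deriv, Complex.cot_eq_cos_div_sin]
    rw [hg]
    ring
  -- logarithmic derivative of F n
  have hFlog : ∀ n, logDeriv (F n) z
      = 1 / z + ∑ j ∈ Finset.range n, (1 / (z - ((j : ℂ) + 1)) + 1 / (z + ((j : ℂ) + 1))) := by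
    intro n
    have hmul : logDeriv (F n) z = logDeriv (fun w : ℂ => (Real.pi : ℂ) * w) z
        + logDeriv (fun w : ℂ => ∏ j ∈ Finset.range n, (1 - w ^ 2 / ((j : ℂ) + 1) ^ 2)) z := by
      rw [hF]
      exact logDeriv_mul z (mul_ne_zero hπ hz0)
        (Finset.prod_ne_zero_iff.mpr fun j _ => hfac j)
        ((differentiable_id.const_mul _).differentiableAt)
        ((Differentiable.fun_finsetProd fun j _ =>
          (differentiable_const (1:ℂ)).sub ((differentiable_pow 2).div_const _)).differentiableAt)
    have h1 : logDeriv (fun w : ℂ => (Real.pi : ℂ) * w) z = 1 / z := by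
      rw [logDeriv_const_mul z _ hπ]
      exact logDeriv_id' z
    have h2 : logDeriv (fun w : ℂ => ∏ j ∈ Finset.range n, (1 - w ^ 2 / ((j : ℂ) + 1) ^ 2)) z
        = ∑ j ∈ Finset.range n, (1 / (z - ((j : ℂ) + 1)) + 1 / (z + ((j : ℂ) + 1))) := by
      have hld := logDeriv_prod (s := Finset.range n)
        (f := fun j : ℕ => fun w : ℂ => 1 - w ^ 2 / ((j : ℂ) + 1) ^ 2) (x := z) (fun j _ => hfac j)
        (fun j _ =>
          ((differentiable_const (1:ℂ)).sub
            ((differentiable_pow 2).div_const _)).differentiableAt)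
      have hld' : logDeriv (fun w : ℂ => ∏ j ∈ Finset.range n, (1 - w ^ 2 / ((j : ℂ) + 1) ^ 2)) z
          = ∑ j ∈ Finset.range n, logDeriv (fun w : ℂ => 1 - w ^ 2 / ((j : ℂ) + 1) ^ 2) z := hld
      rw [hld']
      refine Finset.sum_congr rfl fun j _ => ?_
      have hd : HasDerivAt (fun w : ℂ => 1 - w ^ 2 / ((j : ℂ) + 1) ^ 2)
          (-(2 * z / ((j : ℂ) + 1) ^ 2)) z := by
        have this : HasDerivAt (fun w : ℂ => 1 - w ^ 2 / ((j : ℂ) + 1) ^ 2)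
            (-(((2:ℕ):ℂ) * z ^ (2 - 1) / ((j : ℂ) + 1) ^ 2)) z :=
          ((hasDerivAt_pow 2 z).div_const (((j : ℂ) + 1) ^ 2)).const_sub 1
        convert this using 1
        push_cast
        ring
      have hc : ((j : ℂ) + 1) ^ 2 ≠ 0 := pow_ne_zero _ (hjC j)
      rw [logDeriv_apply, hd.deriv, div_eq_iff (hfac j)]
      field_simp [hsub j, hadd j, hc]
      ring
    rw [hmul, h1, h2]
  -- sum identity for the symmetric partial sums
  have hsum : ∀ N : ℕ, ∑ p ∈ Finset.Icc (-(N : ℤ)) (N : ℤ), 1 / (z - (p : ℂ))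
      = 1 / z + ∑ j ∈ Finset.range N, (1 / (z - ((j : ℂ) + 1)) + 1 / (z + ((j : ℂ) + 1))) := by
    intro N
    induction N with
    | zero => simp
    | succ n ih =>
      have hins : Finset.Icc (-((n : ℤ) + 1)) ((n : ℤ) + 1)
          = insert (-((n : ℤ) + 1)) (insert ((n : ℤ) + 1) (Finset.Icc (-(n : ℤ)) (n : ℤ))) := by
        ext x
        simp only [Finset.mem_Icc, Finset.mem_insert]
        omega
      have hcast : ((n + 1 : ℕ) : ℤ) = (n : ℤ) + 1 := by push_cast; ring
      rw [hcast, hins,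
        Finset.sum_insert (by simp only [Finset.mem_insert, Finset.mem_Icc]; omega),
        Finset.sum_insert (by simp only [Finset.mem_Icc]; omega),
        ih, Finset.sum_range_succ]
      push_cast
      ring
  -- put everything together
  have key := Complex.logDeriv_tendsto isOpen_ball
    (Metric.mem_ball_self one_pos) hF_loc
    (Filter.Eventually.of_forall (f := atTop) hFdiff) hg0
  rw [hglog] at key
  refine key.congr fun N => ?_
  rw [hFlog N, ← hsum N]
end

section
/- For u ∈ (0,1), and α_1, ..., α_n ∈ ℂ with Re(α_j) > 0, the function F_{n,u}(α_1,...,α_n) = ∫_{0 < z_1 ≤ ... ≤ z_n < 1} (z_1^{α_1} ⋯ z_n^{α_n}) / ((1 - u z_1) ⋯ (1 - u z_n)) dz admits the convergent series representation F_{n,u}(α) = Σ_{p_1,...,p_n ≥ 0} u^{p_1 + ... + p_n} / ∏_{j=1}^n (α_1 + ... + α_j + j + p_1 + ... + p_j). -/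
open MeasureTheory

def simplex01 (n : ℕ) : Set (Fin n → ℝ) :=
  {z | (∀ i, 0 < z i ∧ z i < 1) ∧ ∀ i j : Fin n, i ≤ j → z i ≤ z j}

def tfun (n : ℕ) (w : Fin n → ℝ) : ℝ := if h : 0 < n then w ⟨0, h⟩ else 1

def betaShift {n : ℕ} (β : Fin (n+1) → ℂ) : Fin n → ℂ :=
  fun i => β i.succ + if (i : ℕ) = 0 then β 0 + 1 else 0

def Tset (n : ℕ) : Set (ℝ × (Fin n → ℝ)) :=
  {q | q.2 ∈ simplex01 n ∧ 0 < q.1 ∧ q.1 < 1 ∧ ∀ i, q.1 ≤ q.2 i}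

noncomputable def gfun {n : ℕ} (β : Fin (n+1) → ℂ) : ℝ × (Fin n → ℝ) → ℂ :=
  fun q => ((q.1 : ℂ) ^ (β 0)) * ∏ i, ((q.2 i : ℂ) ^ (β i.succ))

lemma cpow_ne_neg_one {β : ℂ} (hβ : 0 < β.re) : β + 1 ≠ 0 := by
  intro h
  have := congrArg Complex.re h
  simp at this; linarith

lemma integral_Ioc_cpow {c : ℝ} (hc : 0 < c) {β : ℂ} (hβ : 0 < β.re) :
    (∫ x in Set.Ioc (0:ℝ) c, (x:ℂ) ^ β) = (c:ℂ) ^ (β + 1) / (β + 1) := by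
  rw [← intervalIntegral.integral_of_le (le_of_lt hc),
    integral_cpow (Or.inl (by linarith : (-1:ℝ) < β.re))]
  rw [Complex.ofReal_zero, Complex.zero_cpow (cpow_ne_neg_one hβ), sub_zero]

lemma measurableSet_Tset {n : ℕ} (hs : MeasurableSet (simplex01 n)) :
    MeasurableSet (Tset n) := by
  have : Tset n = (Set.univ ×ˢ simplex01 n) ∩ ({q : ℝ × (Fin n → ℝ) | 0 < q.1}
      ∩ ({q : ℝ × (Fin n → ℝ) | q.1 < 1} ∩ ⋂ i, {q : ℝ × (Fin n → ℝ) | q.1 ≤ q.2 i})) := by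
    ext q; simp [Tset, Set.mem_iInter]
  rw [this]
  refine (MeasurableSet.univ.prod hs).inter (MeasurableSet.inter ?_ (MeasurableSet.inter ?_
    (MeasurableSet.iInter fun i => ?_)))
  · exact measurableSet_lt measurable_const measurable_fst
  · exact measurableSet_lt measurable_fst measurable_const
  · exact measurableSet_le measurable_fst ((measurable_pi_apply i).comp measurable_snd)

lemma piFinSuccAbove_apply (n : ℕ) (z : Fin (n+1) → ℝ) :
    (MeasurableEquiv.piFinSuccAbove (fun _ : Fin (n+1) => ℝ) 0) z
      = (z 0, fun j : Fin n => z j.succ) := rfl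

lemma image_simplex (n : ℕ) :
    (MeasurableEquiv.piFinSuccAbove (fun _ : Fin (n+1) => ℝ) 0) '' simplex01 (n+1) = Tset n := by
  ext q
  constructor
  · rintro ⟨z, hz, rfl⟩
    refine ⟨⟨fun i => ⟨(hz.1 i.succ).1, (hz.1 i.succ).2⟩,
      fun i j hij => hz.2 i.succ j.succ (Fin.succ_le_succ_iff.2 hij)⟩,
      (hz.1 0).1, (hz.1 0).2, fun i => hz.2 0 i.succ (Fin.zero_le _)⟩
  · rintro ⟨hw, h0, h1, hle⟩
    refine ⟨Fin.cons q.1 q.2, ⟨?_, ?_⟩, ?_⟩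
    · intro i
      rcases Fin.eq_zero_or_eq_succ i with rfl | ⟨k, rfl⟩
      · simpa using ⟨h0, h1⟩
      · simpa using hw.1 k
    · intro i j hij
      rcases Fin.eq_zero_or_eq_succ i with rfl | ⟨k, rfl⟩
      · rcases Fin.eq_zero_or_eq_succ j with rfl | ⟨l, rfl⟩
        · exact le_refl _
        · simpa using hle l
      · rcases Fin.eq_zero_or_eq_succ j with rfl | ⟨l, rfl⟩
        · exact absurd hij (by simp [Fin.le_zero_iff, Fin.succ_ne_zero])
        · simpa using hw.2 k l (Fin.succ_le_succ_iff.1 hij)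
    · rw [piFinSuccAbove_apply]
      simp

lemma norm_cpow_le_one {x : ℝ} (hx0 : 0 < x) (hx1 : x ≤ 1) {β : ℂ} (hβ : 0 ≤ β.re) :
    ‖(x : ℂ) ^ β‖ ≤ 1 := by
  rw [Complex.norm_cpow_eq_rpow_re_of_pos hx0]
  exact Real.rpow_le_one (le_of_lt hx0) hx1 hβ

lemma measurableSet_simplex01 (n : ℕ) : MeasurableSet (simplex01 n) := by
  have : simplex01 n = (⋂ i, {z : Fin n → ℝ | 0 < z i ∧ z i < 1}) ∩
      ⋂ i, ⋂ j, {z : Fin n → ℝ | i ≤ j → z i ≤ z j} := by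
    ext z; simp [simplex01, Set.mem_iInter]
  rw [this]
  refine MeasurableSet.inter (MeasurableSet.iInter fun i => ?_)
    (MeasurableSet.iInter fun i => MeasurableSet.iInter fun j => ?_)
  · exact ((measurableSet_lt measurable_const (measurable_pi_apply i)).inter
      (measurableSet_lt (measurable_pi_apply i) measurable_const))
  · by_cases hij : i ≤ j
    · simp only [hij, forall_true_left]
      exact measurableSet_le (measurable_pi_apply i) (measurable_pi_apply j)
    · simp only [hij]
      simp

lemma norm_prod_cpow_le_one {n : ℕ} {β : Fin n → ℂ} (hβ : ∀ i, 0 < (β i).re)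
    {z : Fin n → ℝ} (hz : z ∈ simplex01 n) :
    ‖∏ i, ((z i : ℂ) ^ β i)‖ ≤ 1 := by
  rw [norm_prod]
  refine Finset.prod_le_one (fun i _ => norm_nonneg _) (fun i _ => ?_)
  exact norm_cpow_le_one (hz.1 i).1 (le_of_lt (hz.1 i).2) (le_of_lt (hβ i))

lemma continuous_prod_cpow {n : ℕ} {β : Fin n → ℂ} (hβ : ∀ i, 0 < (β i).re) :
    Continuous (fun z : Fin n → ℝ => ∏ i, ((z i : ℂ) ^ β i)) :=
  continuous_finset_prod _ fun i _ =>
    (Complex.continuous_ofReal_cpow_const (hβ i)).comp (continuous_apply i)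

lemma integrableOn_gfun {n : ℕ} {β : Fin (n+1) → ℂ} (hβ : ∀ i, 0 < (β i).re) :
    IntegrableOn (gfun β) (Tset n) ((volume : Measure ℝ).prod (volume : Measure (Fin n → ℝ))) := by
  have hsub : Tset n ⊆ Set.Ioo (0:ℝ) 1 ×ˢ Set.pi Set.univ (fun _ : Fin n => Set.Ioo (0:ℝ) 1) :=
    fun q hq => ⟨⟨hq.2.1, hq.2.2.1⟩, fun i _ => hq.1.1 i⟩
  have hbox : ((volume : Measure ℝ).prod (volume : Measure (Fin n → ℝ)))
      (Set.Ioo (0:ℝ) 1 ×ˢ Set.pi Set.univ (fun _ : Fin n => Set.Ioo (0:ℝ) 1)) = 1 := by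
    rw [Measure.prod_prod, volume_pi_pi]
    simp
  refine Measure.integrableOn_of_bounded (M := 1) ?_ ?_ ?_
  · exact ne_top_of_le_ne_top (by simp [hbox]) (measure_mono hsub)
  · exact (((Complex.continuous_ofReal_cpow_const (hβ 0)).comp continuous_fst).mul
      ((continuous_prod_cpow (fun i => hβ i.succ)).comp continuous_snd)).aestronglyMeasurable
  · filter_upwards [ae_restrict_mem (measurableSet_Tset (measurableSet_simplex01 n))] with q hq
    have h1 : ‖(q.1 : ℂ) ^ β 0‖ ≤ 1 :=
      norm_cpow_le_one hq.2.1 (le_of_lt hq.2.2.1) (le_of_lt (hβ 0))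
    have h2 : ‖∏ i, ((q.2 i : ℂ) ^ β i.succ)‖ ≤ 1 :=
      norm_prod_cpow_le_one (fun i => hβ i.succ) hq.1
    calc ‖gfun β q‖ = ‖(q.1 : ℂ) ^ β 0‖ * ‖∏ i, ((q.2 i : ℂ) ^ β i.succ)‖ := norm_mul _ _
      _ ≤ 1 := mul_le_one₀ h1 (norm_nonneg _) h2

lemma inner_integral {n : ℕ} {β : Fin (n+1) → ℂ} (hβ : ∀ i, 0 < (β i).re) (w : Fin n → ℝ) :
    (∫ x : ℝ, (Tset n).indicator (gfun β) (x, w))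
      = (simplex01 n).indicator
          (fun w => ((tfun n w : ℂ) ^ (β 0 + 1) / (β 0 + 1)) * ∏ i, ((w i : ℂ) ^ (β i.succ))) w := by
  by_cases hw : w ∈ simplex01 n
  · rw [Set.indicator_of_mem hw]
    rcases Nat.eq_zero_or_pos n with hn | hn
    · subst hn
      have hA : ∀ x : ℝ, ((x, w) ∈ Tset 0) ↔ x ∈ Set.Ioo (0:ℝ) 1 := by
        intro x
        constructor
        · rintro ⟨-, hx0, hx1, -⟩; exact ⟨hx0, hx1⟩
        · rintro ⟨hx0, hx1⟩; exact ⟨hw, hx0, hx1, fun i => i.elim0⟩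
      have hfx : (fun x : ℝ => (Tset 0).indicator (gfun β) (x, w))
          = (Set.Ioo (0:ℝ) 1).indicator (fun x => (x:ℂ) ^ (β 0)) := by
        funext x
        by_cases hx : x ∈ Set.Ioo (0:ℝ) 1
        · rw [Set.indicator_of_mem ((hA x).2 hx), Set.indicator_of_mem hx]
          simp [gfun]
        · rw [Set.indicator_of_notMem (fun h => hx ((hA x).1 h)), Set.indicator_of_notMem hx]
      rw [hfx, integral_indicator measurableSet_Ioo, ← integral_Ioc_eq_integral_Ioo,
        integral_Ioc_cpow one_pos (hβ 0)]
      simp [tfun]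
    · have hi0 : ∀ i : Fin n, (⟨0, hn⟩ : Fin n) ≤ i := fun i => by simp [Fin.le_def]
      have htw : tfun n w = w ⟨0, hn⟩ := dif_pos hn
      have hw0 : 0 < w ⟨0, hn⟩ := (hw.1 _).1
      have hA : ∀ x : ℝ, ((x, w) ∈ Tset n) ↔ x ∈ Set.Ioc (0:ℝ) (w ⟨0, hn⟩) := by
        intro x
        constructor
        · rintro ⟨-, hx0, -, hxle⟩; exact ⟨hx0, hxle _⟩
        · rintro ⟨hx0, hxle⟩
          exact ⟨hw, hx0, lt_of_le_of_lt hxle (hw.1 _).2,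
            fun i => le_trans hxle (hw.2 _ i (hi0 i))⟩
      have hfx : (fun x : ℝ => (Tset n).indicator (gfun β) (x, w))
          = (Set.Ioc (0:ℝ) (w ⟨0, hn⟩)).indicator
              (fun x => (x:ℂ) ^ (β 0) * ∏ i, ((w i : ℂ) ^ (β i.succ))) := by
        funext x
        by_cases hx : x ∈ Set.Ioc (0:ℝ) (w ⟨0, hn⟩)
        · rw [Set.indicator_of_mem ((hA x).2 hx), Set.indicator_of_mem hx]; rfl
        · rw [Set.indicator_of_notMem (fun h => hx ((hA x).1 h)), Set.indicator_of_notMem hx]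
      rw [hfx, integral_indicator measurableSet_Ioc, MeasureTheory.integral_mul_const,
        integral_Ioc_cpow hw0 (hβ 0), htw]
  · have hz : ∀ x : ℝ, (Tset n).indicator (gfun β) (x, w) = 0 := fun x =>
      Set.indicator_of_notMem (fun h => hw h.1) _
    simp [hz, Set.indicator_of_notMem hw]

lemma fin_Iic_zero (n : ℕ) : Finset.Iic (0 : Fin (n+1)) = {0} := by
  ext i; simp [Fin.le_zero_iff]

lemma sum_Iic_succ {n : ℕ} (β : Fin (n+1) → ℂ) (j : Fin n) :
    ∑ i ∈ Finset.Iic j.succ, β i = β 0 + ∑ i ∈ Finset.Iic j, β i.succ := by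
  have h : Finset.Iic j.succ = insert (0 : Fin (n+1)) ((Finset.Iic j).map (Fin.succEmb n)) := by
    ext i
    induction i using Fin.cases with
    | zero => simp [Fin.zero_le]
    | succ k => simp [Fin.succ_le_succ_iff, Fin.succ_ne_zero, Fin.succ_inj]
  rw [h, Finset.sum_insert (by simp [Fin.succ_ne_zero]), Finset.sum_map]
  simp [Fin.succEmb]

lemma sum_Iic_ite {n : ℕ} (j : Fin n) (c : ℂ) :
    ∑ i ∈ Finset.Iic j, (if (i : ℕ) = 0 then c else 0) = c := by
  have hn : 0 < n := j.pos
  have hiff : ∀ i : Fin n, ((i : ℕ) = 0) ↔ (i = ⟨0, hn⟩) := fun i => by simp [Fin.ext_iff]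
  rw [Finset.sum_congr rfl (fun i _ => by rw [if_congr (hiff i) rfl rfl]),
    Finset.sum_ite_eq' (Finset.Iic j) (⟨0, hn⟩ : Fin n) (fun _ => c)]
  simp [Finset.mem_Iic, Fin.le_def]

lemma sum_Iic_betaShift {n : ℕ} (β : Fin (n+1) → ℂ) (j : Fin n) :
    ∑ i ∈ Finset.Iic j, betaShift β i = (∑ i ∈ Finset.Iic j, β i.succ) + (β 0 + 1) := by
  unfold betaShift
  rw [Finset.sum_add_distrib, sum_Iic_ite j (β 0 + 1)]

lemma betaShift_re {n : ℕ} {β : Fin (n+1) → ℂ} (hβ : ∀ i, 0 < (β i).re) (i : Fin n) :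
    0 < (betaShift β i).re := by
  unfold betaShift
  by_cases h : (i : ℕ) = 0
  · simp only [h, if_true, Complex.add_re, Complex.one_re]
    have := hβ i.succ; have := hβ 0; linarith
  · simp only [h, if_false, add_zero]
    exact hβ i.succ

lemma factor_eq {n : ℕ} {β : Fin (n+1) → ℂ} {w : Fin n → ℝ}
    (hw : w ∈ simplex01 n) :
    ((tfun n w : ℂ) ^ (β 0 + 1) / (β 0 + 1)) * ∏ i, ((w i : ℂ) ^ (β i.succ))
      = (β 0 + 1)⁻¹ * ∏ i, ((w i : ℂ) ^ (betaShift β i)) := by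
  rcases Nat.eq_zero_or_pos n with hn | hn
  · subst hn
    simp [tfun, div_eq_mul_inv, mul_comm]
  · have h1 : ∀ i : Fin n, (w i : ℂ) ^ (betaShift β i)
        = (w i : ℂ) ^ (β i.succ) * (w i : ℂ) ^ (if (i : ℕ) = 0 then β 0 + 1 else 0) := fun i =>
      Complex.cpow_add _ _ (Complex.ofReal_ne_zero.2 (ne_of_gt (hw.1 i).1))
    have h2 : ∀ i : Fin n, (w i : ℂ) ^ (if (i : ℕ) = 0 then β 0 + 1 else 0)
        = (if i = (⟨0, hn⟩ : Fin n) then (w i : ℂ) ^ (β 0 + 1) else 1) := fun i => by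
      by_cases h : (i : ℕ) = 0
      · have hh : i = (⟨0, hn⟩ : Fin n) := Fin.ext h
        simp [h, hh]
      · have hh : ¬ (i = (⟨0, hn⟩ : Fin n)) := fun hc => h (by rw [hc])
        simp [h, hh]
    have hprod : ∏ i, ((w i : ℂ) ^ (betaShift β i))
        = ((w ⟨0, hn⟩ : ℂ) ^ (β 0 + 1)) * ∏ i, ((w i : ℂ) ^ (β i.succ)) := by
      rw [Finset.prod_congr rfl fun i _ => h1 i, Finset.prod_mul_distrib,
        Finset.prod_congr rfl fun i _ => h2 i,
        Finset.prod_ite_eq' Finset.univ (⟨0, hn⟩ : Fin n) (fun i => (w i : ℂ) ^ (β 0 + 1))]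
      simp [mul_comm]
    rw [hprod, tfun, dif_pos hn]
    ring

lemma moment (n : ℕ) : ∀ (β : Fin n → ℂ), (∀ i, 0 < (β i).re) →
    (∫ z in simplex01 n, ∏ i, ((z i : ℂ) ^ β i))
      = ∏ j : Fin n, ((∑ i ∈ Finset.Iic j, β i) + (((j : ℕ) + 1 : ℕ) : ℂ))⁻¹ := by
  induction n with
  | zero =>
    intro β hβ
    have hs : simplex01 0 = Set.univ := by ext z; simp [simplex01]
    rw [hs, Measure.restrict_univ]
    simp [volume_pi, Measure.pi_univ, measureReal_def]
  | succ n ih =>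
    intro β hβ
    have hmp : MeasurePreserving (MeasurableEquiv.piFinSuccAbove (fun _ : Fin (n+1) => ℝ) 0)
        (volume) ((volume : Measure ℝ).prod (volume : Measure (Fin n → ℝ))) := by
      have h := measurePreserving_piFinSuccAbove (fun _ : Fin (n+1) => (volume : Measure ℝ)) 0
      rwa [← volume_pi, ← volume_pi] at h
    have hint : IntegrableOn (gfun β) (Tset n) ((volume : Measure ℝ).prod volume) :=
      integrableOn_gfun hβ
    have hT := measurableSet_Tset (measurableSet_simplex01 n)
    calc (∫ z in simplex01 (n+1), ∏ i, ((z i : ℂ) ^ β i))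
        = ∫ z in simplex01 (n+1),
            gfun β ((MeasurableEquiv.piFinSuccAbove (fun _ : Fin (n+1) => ℝ) 0) z) := by
          refine setIntegral_congr_fun (measurableSet_simplex01 _) fun z _ => ?_
          rw [piFinSuccAbove_apply]
          simp [gfun, Fin.prod_univ_succ]
      _ = ∫ q in (MeasurableEquiv.piFinSuccAbove (fun _ : Fin (n+1) => ℝ) 0) '' simplex01 (n+1),
            gfun β q ∂((volume : Measure ℝ).prod volume) :=
          (hmp.setIntegral_image_emb (MeasurableEquiv.measurableEmbedding _) (gfun β) _).symm
      _ = ∫ q in Tset n, gfun β q ∂((volume : Measure ℝ).prod volume) := by rw [image_simplex]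
      _ = ∫ q, (Tset n).indicator (gfun β) q ∂((volume : Measure ℝ).prod volume) :=
          (integral_indicator hT).symm
      _ = ∫ w, ∫ x, (Tset n).indicator (gfun β) (x, w) :=
          integral_prod_symm _ ((integrable_indicator_iff hT).2 hint)
      _ = ∫ w, (simplex01 n).indicator
            (fun w => ((tfun n w : ℂ) ^ (β 0 + 1) / (β 0 + 1)) * ∏ i, ((w i : ℂ) ^ (β i.succ))) w := by
          simp only [inner_integral hβ]
      _ = ∫ w in simplex01 n,
            ((tfun n w : ℂ) ^ (β 0 + 1) / (β 0 + 1)) * ∏ i, ((w i : ℂ) ^ (β i.succ)) :=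
          integral_indicator (measurableSet_simplex01 n)
      _ = ∫ w in simplex01 n, (β 0 + 1)⁻¹ * ∏ i, ((w i : ℂ) ^ (betaShift β i)) :=
          setIntegral_congr_fun (measurableSet_simplex01 n) fun w hw => factor_eq hw
      _ = (β 0 + 1)⁻¹ * ∫ w in simplex01 n, ∏ i, ((w i : ℂ) ^ (betaShift β i)) :=
          MeasureTheory.integral_const_mul _ _
      _ = (β 0 + 1)⁻¹ *
            ∏ j : Fin n, ((∑ i ∈ Finset.Iic j, betaShift β i) + (((j : ℕ) + 1 : ℕ) : ℂ))⁻¹ := by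
          rw [ih _ (betaShift_re hβ)]
      _ = ∏ j : Fin (n+1), ((∑ i ∈ Finset.Iic j, β i) + (((j : ℕ) + 1 : ℕ) : ℂ))⁻¹ := by
          rw [Fin.prod_univ_succ]
          congr 1
          · rw [fin_Iic_zero]
            simp
          · refine Finset.prod_congr rfl fun j _ => ?_
            rw [sum_Iic_betaShift, sum_Iic_succ]
            push_cast [Fin.val_succ]
            ring_nf


set_option maxHeartbeats 1000000 in
lemma pi_hasSum_real {n : ℕ} (f : Fin n → ℕ → ℝ) (S : Fin n → ℝ)
    (h0 : ∀ i k, 0 ≤ f i k) (h : ∀ i, HasSum (f i) (S i)) :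
    HasSum (fun p : Fin n → ℕ => ∏ i, f i (p i)) (∏ i, S i) := by
  induction n with
  | zero => simpa using hasSum_fintype (fun p : Fin 0 → ℕ => (1:ℝ))
  | succ n ih =>
    rw [← (Fin.consEquiv fun _ : Fin (n+1) => ℕ).hasSum_iff]
    have key : (fun p : Fin (n+1) → ℕ => ∏ i, f i (p i)) ∘
        (Fin.consEquiv fun _ : Fin (n+1) => ℕ) =
        (fun q : ℕ × (Fin n → ℕ) => (f 0 q.1) * ∏ i : Fin n, f i.succ (q.2 i)) := by
      funext q
      simp [Fin.consEquiv, Fin.prod_univ_succ]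
    rw [key, Fin.prod_univ_succ]
    have ihs := ih (fun i => f i.succ) (fun i => S i.succ) (fun i k => h0 i.succ k)
      (fun i => h i.succ)
    have hsum : Summable (fun q : ℕ × (Fin n → ℕ) =>
        (f 0) q.1 * (fun w : Fin n → ℕ => ∏ i : Fin n, f i.succ (w i)) q.2) :=
      by
        apply Summable.mul_of_nonneg (h 0).summable ihs.summable
        · intro k; exact h0 0 k
        · intro q; exact Finset.prod_nonneg fun i _ => h0 i.succ (q i)
    exact HasSum.mul (f := f 0) (g := fun w : Fin n → ℕ => ∏ i : Fin n, f i.succ (w i))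
      (h 0) ihs hsum

set_option maxHeartbeats 1000000 in
lemma pi_hasSum_complex {n : ℕ} (f : Fin n → ℕ → ℂ) (S : Fin n → ℂ)
    (h : ∀ i, HasSum (f i) (S i)) (hn : ∀ i, Summable fun k => ‖f i k‖) :
    HasSum (fun p : Fin n → ℕ => ∏ i, f i (p i)) (∏ i, S i) := by
  induction n with
  | zero => simpa using hasSum_fintype (fun p : Fin 0 → ℕ => (1:ℂ))
  | succ n ih =>
    rw [← (Fin.consEquiv fun _ : Fin (n+1) => ℕ).hasSum_iff]
    have key : (fun p : Fin (n+1) → ℕ => ∏ i, f i (p i)) ∘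
        (Fin.consEquiv fun _ : Fin (n+1) => ℕ) =
        (fun q : ℕ × (Fin n → ℕ) => (f 0 q.1) * ∏ i : Fin n, f i.succ (q.2 i)) := by
      funext q
      simp [Fin.consEquiv, Fin.prod_univ_succ]
    rw [key, Fin.prod_univ_succ]
    have ihs := ih (fun i => f i.succ) (fun i => S i.succ) (fun i => h i.succ)
      (fun i => hn i.succ)
    have hnorm : Summable fun q : ℕ × (Fin n → ℕ) =>
        ‖(f 0 q.1) * ∏ i : Fin n, f i.succ (q.2 i)‖ := by
      have := Summable.mul_of_nonneg (hn 0)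
        (pi_hasSum_real (fun i k => ‖f i.succ k‖) (fun i => ∑' k, ‖f i.succ k‖)
          (fun i k => norm_nonneg _) (fun i => (hn i.succ).hasSum)).summable
        (fun k => norm_nonneg _) (fun q => Finset.prod_nonneg fun i _ => norm_nonneg _)
      simpa [norm_mul, norm_prod] using this
    exact HasSum.mul (f := f 0) (g := fun w : Fin n → ℕ => ∏ i : Fin n, f i.succ (w i))
      (h 0) ihs hnorm.of_norm

lemma volume_simplex01_le (n : ℕ) : volume (simplex01 n) ≤ 1 := by
  calc volume (simplex01 n)
      ≤ volume (Set.pi Set.univ (fun _ : Fin n => Set.Ioo (0:ℝ) 1)) :=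
        measure_mono (fun z hz i _ => hz.1 i)
    _ = 1 := by rw [volume_pi_pi]; simp

lemma integrableOn_prod_cpow {n : ℕ} {β : Fin n → ℂ} (hβ : ∀ i, 0 < (β i).re) :
    IntegrableOn (fun z : Fin n → ℝ => ∏ i, ((z i : ℂ) ^ β i)) (simplex01 n) volume := by
  refine Measure.integrableOn_of_bounded (M := 1) ?_ ?_ ?_
  · exact ne_top_of_le_ne_top ENNReal.one_ne_top (volume_simplex01_le n)
  · exact (continuous_prod_cpow hβ).aestronglyMeasurable
  · filter_upwards [ae_restrict_mem (measurableSet_simplex01 n)] with z hz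
    exact norm_prod_cpow_le_one hβ hz

noncomputable def Fterm (n : ℕ) (u : ℝ) (α : Fin n → ℂ) (p : Fin n → ℕ) (z : Fin n → ℝ) : ℂ :=
  (u : ℂ) ^ (∑ i, p i) * ∏ i, ((z i : ℂ) ^ (α i + (p i : ℂ)))

set_option maxHeartbeats 2000000 in
theorem stmt_11 (n : ℕ) (u : ℝ) (hu : u ∈ Set.Ioo (0 : ℝ) 1)
    (α : Fin n → ℂ) (hα : ∀ j, 0 < (α j).re) :
    HasSum
      (fun p : Fin n → ℕ => (u : ℂ) ^ (∑ i, p i) /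
        ∏ j : Fin n,
          ((∑ i ∈ Finset.Iic j, α i) + ((j : ℕ) + 1 : ℕ) + ((∑ i ∈ Finset.Iic j, p i : ℕ) : ℂ)))
      (∫ z in simplex01 n, ∏ i : Fin n, ((z i : ℂ) ^ (α i) / (1 - (u : ℂ) * (z i : ℂ)))) := by
  obtain ⟨hu0, hu1⟩ := hu
  have hre : ∀ (p : Fin n → ℕ) (i : Fin n), 0 < (α i + (p i : ℂ)).re := by
    intro p i
    have := hα i
    simp only [Complex.add_re, Complex.natCast_re]
    positivity
  have hIntF : ∀ p, Integrable (Fterm n u α p) (volume.restrict (simplex01 n)) := by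
    intro p
    unfold Fterm
    exact (integrableOn_prod_cpow (hre p)).const_mul _
  haveI : IsFiniteMeasure (volume.restrict (simplex01 n)) := by
    constructor
    rw [Measure.restrict_apply_univ]
    exact lt_of_le_of_lt (volume_simplex01_le n) (by norm_num)
  have hSu : Summable (fun p : Fin n → ℕ => u ^ (∑ i, p i)) := by
    have h := (pi_hasSum_real (n := n) (fun _ k => u ^ k) (fun _ => (1 - u)⁻¹)
      (fun i k => pow_nonneg (le_of_lt hu0) k)
      (fun i => hasSum_geometric_of_lt_one (le_of_lt hu0) hu1)).summable
    simpa [Finset.prod_pow_eq_pow_sum] using h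
  have hnormF : ∀ (p : Fin n → ℕ) (z : Fin n → ℝ), z ∈ simplex01 n →
      ‖Fterm n u α p z‖ ≤ u ^ (∑ i, p i) := by
    intro p z hz
    unfold Fterm
    rw [norm_mul, norm_pow, Complex.norm_real, Real.norm_eq_abs, abs_of_pos hu0]
    calc u ^ (∑ i, p i) * ‖∏ i, ((z i : ℂ) ^ (α i + (p i : ℂ)))‖
        ≤ u ^ (∑ i, p i) * 1 :=
          mul_le_mul_of_nonneg_left (norm_prod_cpow_le_one (hre p) hz) (by positivity)
      _ = u ^ (∑ i, p i) := mul_one _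
  have hnormint : ∀ p, (∫ a, ‖Fterm n u α p a‖ ∂(volume.restrict (simplex01 n)))
      ≤ u ^ (∑ i, p i) := by
    intro p
    have hb : ∀ᵐ z ∂(volume.restrict (simplex01 n)), ‖Fterm n u α p z‖ ≤ u ^ (∑ i, p i) := by
      filter_upwards [ae_restrict_mem (measurableSet_simplex01 n)] with z hz
      exact hnormF p z hz
    calc (∫ a, ‖Fterm n u α p a‖ ∂(volume.restrict (simplex01 n)))
        ≤ ∫ _, u ^ (∑ i, p i) ∂(volume.restrict (simplex01 n)) :=
          integral_mono_ae (hIntF p).norm (integrable_const _) hb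
      _ = ((volume.restrict (simplex01 n)) Set.univ).toReal * u ^ (∑ i, p i) := by
          rw [integral_const, smul_eq_mul, measureReal_def]
      _ ≤ 1 * u ^ (∑ i, p i) := by
          refine mul_le_mul_of_nonneg_right ?_ (by positivity)
          have h1 : (volume.restrict (simplex01 n)) Set.univ ≤ 1 := by
            rw [Measure.restrict_apply_univ]; exact volume_simplex01_le n
          simpa using ENNReal.toReal_mono (by norm_num) h1
      _ = u ^ (∑ i, p i) := one_mul _
  have hsum : Summable (fun p => ∫ a, ‖Fterm n u α p a‖ ∂(volume.restrict (simplex01 n))) :=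
    Summable.of_nonneg_of_le (fun p => integral_nonneg fun a => norm_nonneg _) hnormint hSu
  have main := hasSum_integral_of_summable_integral_norm hIntF hsum
  have h1 : (fun p : Fin n → ℕ => ∫ a, Fterm n u α p a ∂(volume.restrict (simplex01 n)))
      = (fun p : Fin n → ℕ => (u : ℂ) ^ (∑ i, p i) /
        ∏ j : Fin n,
          ((∑ i ∈ Finset.Iic j, α i) + ((j : ℕ) + 1 : ℕ) + ((∑ i ∈ Finset.Iic j, p i : ℕ) : ℂ))) := by
    funext p
    unfold Fterm
    rw [MeasureTheory.integral_const_mul, moment n _ (hre p), Finset.prod_inv_distrib,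
      ← div_eq_mul_inv]
    congr 1
    refine Finset.prod_congr rfl fun j _ => ?_
    rw [Finset.sum_add_distrib]
    push_cast
    ring
  have h2 : (∫ a, ∑' p : Fin n → ℕ, Fterm n u α p a ∂(volume.restrict (simplex01 n)))
      = ∫ z in simplex01 n, ∏ i : Fin n, ((z i : ℂ) ^ (α i) / (1 - (u : ℂ) * (z i : ℂ))) := by
    refine setIntegral_congr_fun (measurableSet_simplex01 n) fun z hz => ?_
    have hz0 : ∀ i, 0 < z i := fun i => (hz.1 i).1
    have hz1 : ∀ i, z i < 1 := fun i => (hz.1 i).2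
    have huz : ∀ i, ‖(u : ℂ) * (z i : ℂ)‖ < 1 := by
      intro i
      have hcast : (u : ℂ) * (z i : ℂ) = ((u * z i : ℝ) : ℂ) := by push_cast; ring
      rw [hcast, Complex.norm_real, Real.norm_eq_abs,
        abs_of_pos (mul_pos hu0 (hz0 i))]
      nlinarith [hz0 i, hz1 i]
    have hgeo : ∀ i, HasSum (fun k : ℕ => (z i : ℂ) ^ (α i) * ((u : ℂ) * (z i : ℂ)) ^ k)
        ((z i : ℂ) ^ (α i) * (1 - (u : ℂ) * (z i : ℂ))⁻¹) := fun i =>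
      (hasSum_geometric_of_norm_lt_one (huz i)).mul_left _
    have hnorm : ∀ i, Summable fun k : ℕ =>
        ‖(z i : ℂ) ^ (α i) * ((u : ℂ) * (z i : ℂ)) ^ k‖ := by
      intro i
      have hfe : (fun k : ℕ => ‖(z i : ℂ) ^ (α i) * ((u : ℂ) * (z i : ℂ)) ^ k‖)
          = fun k => ‖(z i : ℂ) ^ (α i)‖ * ‖(u : ℂ) * (z i : ℂ)‖ ^ k := by
        funext k; rw [norm_mul, norm_pow]
      rw [hfe]
      exact (summable_geometric_of_lt_one (norm_nonneg _) (huz i)).mul_left _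
    have hps := pi_hasSum_complex
      (fun i k => (z i : ℂ) ^ (α i) * ((u : ℂ) * (z i : ℂ)) ^ k)
      (fun i => (z i : ℂ) ^ (α i) * (1 - (u : ℂ) * (z i : ℂ))⁻¹) hgeo hnorm
    have hfp : ∀ p : Fin n → ℕ,
        (∏ i, ((z i : ℂ) ^ (α i) * ((u : ℂ) * (z i : ℂ)) ^ (p i))) = Fterm n u α p z := by
      intro p
      unfold Fterm
      have hzc : ∀ i : Fin n, ((z i : ℝ) : ℂ) ≠ 0 :=
        fun i => Complex.ofReal_ne_zero.2 (ne_of_gt (hz0 i))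
      have hsplit : ∀ i : Fin n, (z i : ℂ) ^ (α i + (p i : ℂ))
          = (z i : ℂ) ^ (α i) * (z i : ℂ) ^ (p i) := fun i => by
        rw [Complex.cpow_add _ _ (hzc i), Complex.cpow_natCast]
      rw [Finset.prod_congr rfl fun i _ => hsplit i]
      simp only [mul_pow, Finset.prod_mul_distrib, Finset.prod_pow_eq_pow_sum]
      ring
    have heq : (fun p : Fin n → ℕ =>
        ∏ i, ((z i : ℂ) ^ (α i) * ((u : ℂ) * (z i : ℂ)) ^ (p i)))
        = fun p => Fterm n u α p z := funext hfp
    rw [heq] at hps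
    rw [hps.tsum_eq]
    exact Finset.prod_congr rfl fun i _ => (div_eq_mul_inv _ _).symm
  rw [h1, h2] at main
  exact main
end
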